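/- arXiv:1509.09053 — 2 statements merged into one kernel-verified Lean document; each statement's English description precedes it below -/
import Mathlib

section
/- Let P_s(x) = (s*!/σ^{s*}) Σ_{ℓ=0}^{s*} (C(s,ℓ)/C(s*,ℓ)) · C_0^ℓ · C(m,ℓ) · C(xσ + T_0 − ℓ, s* − ℓ), where s* = min{s,m}, C_0 = Λσ/m, and C(y,k) denotes the generalized binomial coefficient. Then P_s is a monic polynomial in x of degree s*, and the sum of its negated roots equals (s*·T_0 − C(s*,2))/σ + Λ·s, i.e., the coefficient of x^{s*−1} in P_s equals (s*T_0 − C(s*,2))/σ + Λs. -/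
open Finset

/-- Generalized binomial coefficient `C(y, k) = y(y-1)⋯(y-k+1)/k!` for real `y`. -/
noncomputable def genBinom (y : ℝ) (k : ℕ) : ℝ :=
  (∏ i ∈ range k, (y - i)) / (Nat.factorial k)


noncomputable def auxC (σ Λ : ℝ) (m s N ℓ : ℕ) : ℝ :=
  ((Nat.factorial N : ℝ) / σ ^ N) * ((s.choose ℓ : ℝ) / (N.choose ℓ : ℝ)) * (Λ * σ / m) ^ ℓ
      * (m.choose ℓ : ℝ) * σ ^ (N - ℓ) / (Nat.factorial (N - ℓ) : ℝ)

open Polynomial in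
noncomputable def auxQ (σ T0 : ℝ) (k ℓ : ℕ) : Polynomial ℝ :=
  ∏ i ∈ range k, (X - C (((ℓ : ℝ) + i - T0) / σ))

open Polynomial in
lemma auxQ_monic (σ T0 : ℝ) (k ℓ : ℕ) : (auxQ σ T0 k ℓ).Monic :=
  monic_prod_of_monic _ _ fun i _ => monic_X_sub_C _

open Polynomial in
lemma auxQ_natDegree (σ T0 : ℝ) (k ℓ : ℕ) : (auxQ σ T0 k ℓ).natDegree = k := by
  rw [auxQ, natDegree_prod_of_monic _ _ fun i _ => monic_X_sub_C _]
  simp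

open Polynomial in
lemma auxQ_degree (σ T0 : ℝ) (k ℓ : ℕ) : (auxQ σ T0 k ℓ).degree = k := by
  rw [degree_eq_natDegree (auxQ_monic σ T0 k ℓ).ne_zero, auxQ_natDegree]

open Polynomial in
lemma auxQ_coeff_self (σ T0 : ℝ) (k ℓ : ℕ) : (auxQ σ T0 k ℓ).coeff k = 1 := by
  have := (auxQ_monic σ T0 k ℓ).coeff_natDegree
  rwa [auxQ_natDegree] at this

open Polynomial in
lemma auxQ_coeff_pred (σ T0 : ℝ) (n ℓ : ℕ) :
    (auxQ σ T0 (n + 1) ℓ).coeff n = -∑ i ∈ range (n + 1), (((ℓ : ℝ) + i - T0) / σ) := by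
  have h := Polynomial.prod_X_sub_C_coeff_card_pred (range (n + 1))
    (fun i => (((ℓ : ℕ) : ℝ) + i - T0) / σ) (by simp)
  simpa [auxQ] using h

lemma sum_range_id_choose (n : ℕ) : (∑ i ∈ range (n + 1), i) = (n + 1).choose 2 := by
  have h1 := Finset.sum_range_id_mul_two (n + 1)
  have h2 := Nat.choose_two_right (n + 1)
  omega

/-- `P_s(x) = (s*!/σ^{s*}) Σ_{ℓ=0}^{s*} (C(s,ℓ)/C(s*,ℓ)) C₀^ℓ C(m,ℓ) C(xσ+T₀−ℓ, s*−ℓ)`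
with `s* = min(s,m)` and `C₀ = Λσ/m` is a monic polynomial of degree `s*` whose
coefficient of `x^{s*−1}` (the sum of its negated roots) equals
`(s* T₀ − C(s*,2))/σ + Λ s`. -/
theorem P_s_monic_and_subleading_coeff (σ T0 Λ : ℝ) (m s : ℕ)
    (hσ : 0 < σ) (hT0 : 0 < T0) (hm : 1 ≤ m) (hs : 1 ≤ s) :
    ∃ P : Polynomial ℝ,
      (∀ x : ℝ, P.eval x
        = ((Nat.factorial (min s m) : ℝ) / σ ^ (min s m)) *
            ∑ ℓ ∈ range (min s m + 1),
              ((Nat.choose s ℓ : ℝ) / (Nat.choose (min s m) ℓ : ℝ))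
                * (Λ * σ / m) ^ ℓ * (Nat.choose m ℓ : ℝ)
                * genBinom (x * σ + T0 - ℓ) (min s m - ℓ)) ∧
      P.Monic ∧ P.natDegree = min s m ∧
      P.coeff (min s m - 1)
        = ((min s m : ℝ) * T0 - (Nat.choose (min s m) 2 : ℝ)) / σ + Λ * s := by
  classical
  have hσ0 : σ ≠ 0 := hσ.ne'
  have hm0 : (m : ℝ) ≠ 0 := Nat.cast_ne_zero.mpr (by omega)
  have hN1 : 1 ≤ min s m := le_min hs hm
  obtain ⟨n, hn⟩ : ∃ n, min s m = n + 1 := ⟨min s m - 1, by omega⟩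
  rw [hn]
  simp only [Nat.add_sub_cancel]
  have hd0 : auxC σ Λ m s (n + 1) 0 = 1 := by
    simp only [auxC, Nat.choose_zero_right, pow_zero, Nat.sub_zero, Nat.cast_one]
    field_simp
  have hd1 : auxC σ Λ m s (n + 1) 1 = Λ * s := by
    rw [auxC]
    simp only [Nat.choose_one_right, pow_one, Nat.add_sub_cancel, Nat.factorial_succ, pow_succ]
    push_cast
    field_simp
  have hf0 : (Polynomial.C (auxC σ Λ m s (n + 1) 0) * auxQ σ T0 (n + 1 - 0) 0).Monic := by
    rw [hd0, map_one, one_mul]; exact auxQ_monic _ _ _ _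
  have hf0deg : (Polynomial.C (auxC σ Λ m s (n + 1) 0) * auxQ σ T0 (n + 1 - 0) 0).degree
      = ((n + 1 : ℕ) : WithBot ℕ) := by
    rw [hd0, map_one, one_mul, Nat.sub_zero, auxQ_degree]
  have hlow : (∑ k ∈ range (n + 1),
        Polynomial.C (auxC σ Λ m s (n + 1) (k + 1)) * auxQ σ T0 (n + 1 - (k + 1)) (k + 1)).degree
      < ((n + 1 : ℕ) : WithBot ℕ) := by
    refine lt_of_le_of_lt (Polynomial.degree_sum_le _ _) ?_
    rw [Finset.sup_lt_iff (WithBot.bot_lt_coe _)]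
    intro ℓ hℓ
    calc (Polynomial.C (auxC σ Λ m s (n + 1) (ℓ + 1)) * auxQ σ T0 (n + 1 - (ℓ + 1)) (ℓ + 1)).degree
        ≤ (Polynomial.C (auxC σ Λ m s (n + 1) (ℓ + 1))).degree
            + (auxQ σ T0 (n + 1 - (ℓ + 1)) (ℓ + 1)).degree := Polynomial.degree_mul_le _ _
      _ ≤ 0 + (auxQ σ T0 (n + 1 - (ℓ + 1)) (ℓ + 1)).degree :=
          add_le_add Polynomial.degree_C_le le_rfl
      _ = ((n + 1 - (ℓ + 1) : ℕ) : WithBot ℕ) := by rw [zero_add, auxQ_degree]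
      _ < ((n + 1 : ℕ) : WithBot ℕ) := by exact_mod_cast (by omega : n + 1 - (ℓ + 1) < n + 1)
  have hmonic : (∑ ℓ ∈ range (n + 1 + 1),
      Polynomial.C (auxC σ Λ m s (n + 1) ℓ) * auxQ σ T0 (n + 1 - ℓ) ℓ).Monic := by
    rw [Finset.sum_range_succ']
    exact hf0.add_of_right (by rw [hf0deg]; exact hlow)
  have hdeg : (∑ ℓ ∈ range (n + 1 + 1),
      Polynomial.C (auxC σ Λ m s (n + 1) ℓ) * auxQ σ T0 (n + 1 - ℓ) ℓ).degree
      = ((n + 1 : ℕ) : WithBot ℕ) := by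
    rw [Finset.sum_range_succ',
      Polynomial.degree_add_eq_right_of_degree_lt (by rw [hf0deg]; exact hlow), hf0deg]
  refine ⟨∑ ℓ ∈ range (n + 1 + 1), Polynomial.C (auxC σ Λ m s (n + 1) ℓ) * auxQ σ T0 (n + 1 - ℓ) ℓ,
    ?_, hmonic, Polynomial.natDegree_eq_of_degree_eq_some hdeg, ?_⟩
  · -- eval
    intro x
    rw [Polynomial.eval_finset_sum, Finset.mul_sum]
    refine Finset.sum_congr rfl fun ℓ hℓ => ?_
    simp only [Polynomial.eval_mul, Polynomial.eval_C, auxQ, Polynomial.eval_prod,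
      Polynomial.eval_sub, Polynomial.eval_X]
    rw [genBinom]
    have hk : ∏ i ∈ range (n + 1 - ℓ), (x * σ + T0 - ℓ - i)
        = σ ^ (n + 1 - ℓ) * ∏ i ∈ range (n + 1 - ℓ), (x - ((ℓ : ℝ) + i - T0) / σ) := by
      calc ∏ i ∈ range (n + 1 - ℓ), (x * σ + T0 - ℓ - i)
          = ∏ i ∈ range (n + 1 - ℓ), (σ * (x - ((ℓ : ℝ) + i - T0) / σ)) :=
            Finset.prod_congr rfl fun i _ => by field_simp; ring
        _ = _ := by rw [Finset.prod_mul_distrib, Finset.prod_const, Finset.card_range]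
    rw [auxC, hk]
    ring
  · -- coeff
    rw [Polynomial.finset_sum_coeff]
    rw [← Finset.sum_subset (Finset.range_subset_range.mpr (by omega : 2 ≤ n + 1 + 1)) ?_]
    · rw [Finset.sum_range_succ, Finset.sum_range_one]
      have h0 : (Polynomial.C (auxC σ Λ m s (n + 1) 0) * auxQ σ T0 (n + 1 - 0) 0).coeff n
          = -∑ i ∈ range (n + 1), (((0 : ℕ) : ℝ) + i - T0) / σ := by
        rw [hd0, map_one, one_mul, Nat.sub_zero, auxQ_coeff_pred]
      have h1 : (Polynomial.C (auxC σ Λ m s (n + 1) 1) * auxQ σ T0 (n + 1 - 1) 1).coeff n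
          = Λ * s := by
        rw [Polynomial.coeff_C_mul, Nat.add_sub_cancel, auxQ_coeff_self, mul_one, hd1]
      rw [h0, h1]
      have hsum : (∑ i ∈ range (n + 1), (i : ℝ)) = ((n + 1).choose 2 : ℝ) := by
        rw [← sum_range_id_choose n, Nat.cast_sum]
      have hs2 : ∑ i ∈ range (n + 1), ((((0 : ℕ) : ℝ) + i - T0) / σ)
          = (((n + 1).choose 2 : ℝ) - ((n : ℝ) + 1) * T0) / σ := by
        rw [← Finset.sum_div]
        congr 1
        rw [Finset.sum_sub_distrib]
        simp [hsum]
      rw [hs2]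
      have hcast : (min (s : ℝ) (m : ℝ)) = (n : ℝ) + 1 := by
        rw [← Nat.cast_min, hn]; push_cast; ring
      rw [hcast]
      push_cast
      ring
    · intro ℓ h1 h2
      apply Polynomial.coeff_eq_zero_of_natDegree_lt
      calc (Polynomial.C (auxC σ Λ m s (n + 1) ℓ) * auxQ σ T0 (n + 1 - ℓ) ℓ).natDegree
          ≤ (Polynomial.C (auxC σ Λ m s (n + 1) ℓ)).natDegree
              + (auxQ σ T0 (n + 1 - ℓ) ℓ).natDegree := Polynomial.natDegree_mul_le
        _ = n + 1 - ℓ := by rw [Polynomial.natDegree_C, auxQ_natDegree, zero_add]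
        _ < n := by
            simp only [Finset.mem_range] at h1 h2
            omega
end

section
/- Let f_{j,s,s} = Σ_{ℓ=0}^{s*} C(s,ℓ) C_0^ℓ C(m,ℓ)/C(T_{j−1},ℓ) with T_j = T_0 + σj, C_0 = Λσ/m and s* = min{s,m}. If λ_{1,s},…,λ_{s*,s} are the negated roots of the monic polynomial P_s (so P_s(x) = ∏_ℓ (x+λ_{ℓ,s})), then ∏_{j=1}^n f_{j,s,s} = ∏_{ℓ=1}^{s*} [Γ(n+λ_{ℓ,s}) Γ((T_0+1−ℓ)/σ)] / [Γ(λ_{ℓ,s}) Γ(n + (T_0+1−ℓ)/σ)]. -/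
open Finset

private lemma genBinom_term_aux (t : ℝ) (k ℓ m : ℕ) (hℓ : ℓ ≤ k) (hk : k ≤ m)
    (ht : (m : ℝ) ≤ t) (a b c : ℝ) :
    (a * b * c / genBinom t ℓ) * ∏ i ∈ range k, (t - i)
    = (Nat.factorial k : ℝ) * (a / (Nat.choose k ℓ : ℝ) * b * c * genBinom (t - ℓ) (k - ℓ)) := by
  have hP : (∏ i ∈ range ℓ, (t - (i:ℝ))) ≠ 0 := by
    apply Finset.prod_ne_zero_iff.mpr
    intro i hi
    simp only [mem_range] at hi
    have : (i : ℝ) < m := by exact_mod_cast lt_of_lt_of_le hi (le_trans hℓ hk)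
    linarith
  have hsplit : ∏ i ∈ range k, (t - (i:ℝ)) =
      (∏ i ∈ range ℓ, (t - (i:ℝ))) * ∏ i ∈ range (k - ℓ), (t - ℓ - i) := by
    have h2 := Finset.prod_range_add (fun i : ℕ => t - i) ℓ (k - ℓ)
    rw [Nat.add_sub_cancel' hℓ] at h2
    rw [h2]
    congr 1
    apply Finset.prod_congr rfl
    intro i _
    push_cast
    ring
  have hfact : (Nat.factorial k : ℝ)
      = (Nat.choose k ℓ : ℝ) * Nat.factorial ℓ * Nat.factorial (k - ℓ) := by
    exact_mod_cast (Nat.choose_mul_factorial_mul_factorial hℓ).symm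
  have hch : (Nat.choose k ℓ : ℝ) ≠ 0 := by
    exact_mod_cast ne_of_gt (Nat.choose_pos hℓ)
  rw [hsplit, genBinom, genBinom, hfact]
  have hf1 : (Nat.factorial ℓ : ℝ) ≠ 0 := by exact_mod_cast Nat.factorial_ne_zero ℓ
  have hf2 : (Nat.factorial (k-ℓ) : ℝ) ≠ 0 := by exact_mod_cast Nat.factorial_ne_zero (k-ℓ)
  field_simp

private lemma prod_Icc_mu (σ T0 x t : ℝ) (k : ℕ) (hσ0 : σ ≠ 0) (ht : t = T0 + σ * x) :
    ∏ ℓ ∈ Icc 1 k, (x + (T0 + 1 - ℓ) / σ) = (∏ i ∈ range k, (t - i)) / σ ^ k := by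
  rw [← Finset.Ico_add_one_right_eq_Icc, Finset.prod_Ico_eq_prod_range, Nat.add_sub_cancel]
  have h : ∀ i ∈ range k, x + (T0 + 1 - (1+i : ℕ)) / σ = (t - i) / σ := by
    intro i _
    subst ht; push_cast; field_simp; ring
  rw [Finset.prod_congr rfl h, Finset.prod_div_distrib, Finset.prod_const, Finset.card_range]

/-- Gamma-function product formula for `∏_{j=1}^n f_{j,s,s}` (model M), where
`f_{j,s,s} = Σ_{ℓ=0}^{s*} C(s,ℓ) C₀^ℓ C(m,ℓ)/C(T_{j−1},ℓ)` with `T_j = T₀+σj`,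
`C₀ = Λσ/m`, `s* = min(s,m)`, and `λ_{1,s},…,λ_{s*,s}` are the negated roots of
the monic polynomial `P_s`. -/
theorem product_f_gamma_form_model_M (σ T0 Λ : ℝ) (m s : ℕ)
    (hσ : 0 < σ) (hT0 : (m : ℝ) ≤ T0) (hm : 1 ≤ m) (hs : 1 ≤ s)
    (f : ℕ → ℝ)
    (hf : ∀ j : ℕ, 1 ≤ j → f j
      = ∑ ℓ ∈ range (min s m + 1),
          (Nat.choose s ℓ : ℝ) * (Λ * σ / m) ^ ℓ * (Nat.choose m ℓ : ℝ)
            / genBinom (T0 + σ * ((j : ℝ) - 1)) ℓ)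
    (hfpos : ∀ j : ℕ, 1 ≤ j → 0 < f j)
    (lam : ℕ → ℝ)
    (hlam : ∀ x : ℝ,
      ((Nat.factorial (min s m) : ℝ) / σ ^ (min s m)) *
          ∑ ℓ ∈ range (min s m + 1),
            ((Nat.choose s ℓ : ℝ) / (Nat.choose (min s m) ℓ : ℝ))
              * (Λ * σ / m) ^ ℓ * (Nat.choose m ℓ : ℝ)
              * genBinom (x * σ + T0 - ℓ) (min s m - ℓ)
        = ∏ ℓ ∈ Icc 1 (min s m), (x + lam ℓ)) :
    ∀ n : ℕ, ∏ j ∈ Icc 1 n, f j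
      = ∏ ℓ ∈ Icc 1 (min s m),
          Real.Gamma ((n : ℝ) + lam ℓ) * Real.Gamma ((T0 + 1 - ℓ) / σ)
            / (Real.Gamma (lam ℓ) * Real.Gamma ((n : ℝ) + (T0 + 1 - ℓ) / σ)) := by
  set k := min s m with hk
  have hkm : k ≤ m := min_le_right s m
  have hσ0 : σ ≠ 0 := ne_of_gt hσ
  have hμpos : ∀ ℓ ∈ Icc 1 k, 0 < (T0 + 1 - (ℓ:ℝ)) / σ := by
    intro ℓ hℓ
    simp only [mem_Icc] at hℓ
    have h1 : (ℓ : ℝ) ≤ m := by exact_mod_cast le_trans hℓ.2 hkm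
    exact div_pos (by linarith) hσ
  -- Key identity
  have key : ∀ j : ℕ, 1 ≤ j →
      f j * ∏ ℓ ∈ Icc 1 k, (((j:ℝ) - 1) + (T0 + 1 - (ℓ:ℝ)) / σ)
        = ∏ ℓ ∈ Icc 1 k, (((j:ℝ) - 1) + lam ℓ) := by
    intro j hj
    have hj1 : (1:ℝ) ≤ (j:ℝ) := by exact_mod_cast hj
    have htm : (m:ℝ) ≤ T0 + σ * ((j:ℝ) - 1) := by nlinarith
    rw [hf j hj,
      prod_Icc_mu σ T0 ((j:ℝ)-1) (T0 + σ * ((j:ℝ)-1)) k hσ0 rfl,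
      ← hlam ((j:ℝ)-1), Finset.sum_mul, Finset.mul_sum]
    apply Finset.sum_congr rfl
    intro ℓ hℓ
    have hℓk : ℓ ≤ k := by simp only [mem_range] at hℓ; omega
    have harg : ((j:ℝ)-1) * σ + T0 - ℓ = (T0 + σ * ((j:ℝ)-1)) - ℓ := by ring
    rw [harg]
    have haux := genBinom_term_aux (T0 + σ * ((j:ℝ)-1)) k ℓ m hℓk hkm htm
      (Nat.choose s ℓ : ℝ) ((Λ * σ / m) ^ ℓ) (Nat.choose m ℓ : ℝ)
    linear_combination (σ^k)⁻¹ * haux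
  -- lam ℓ avoids nonpositive integers
  have hlampos : ∀ n : ℕ, 0 < ∏ ℓ ∈ Icc 1 k, ((n:ℝ) + lam ℓ) := by
    intro n
    have h := key (n+1) (Nat.le_add_left 1 n)
    have hc : ((n+1:ℕ):ℝ) - 1 = (n:ℝ) := by push_cast; ring
    rw [hc] at h
    rw [← h]
    apply mul_pos (hfpos (n+1) (Nat.le_add_left 1 n))
    apply Finset.prod_pos
    intro ℓ hℓ
    have := hμpos ℓ hℓ
    have hn0 : (0:ℝ) ≤ n := Nat.cast_nonneg n
    linarith
  have hlamne : ∀ ℓ ∈ Icc 1 k, ∀ n : ℕ, ((n:ℝ) + lam ℓ) ≠ 0 := by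
    intro ℓ hℓ n h0
    exact (hlampos n).ne' (Finset.prod_eq_zero hℓ h0)
  have hGlam : ∀ ℓ ∈ Icc 1 k, Real.Gamma (lam ℓ) ≠ 0 := by
    intro ℓ hℓ
    apply Real.Gamma_ne_zero
    intro n h
    exact hlamne ℓ hℓ n (by rw [h]; ring)
  intro n
  induction n with
  | zero =>
    rw [show Icc 1 0 = (∅ : Finset ℕ) from rfl, Finset.prod_empty]
    symm
    apply Finset.prod_eq_one
    intro ℓ hℓ
    have h1 := hGlam ℓ hℓ
    have h2 : Real.Gamma ((T0 + 1 - (ℓ:ℝ)) / σ) ≠ 0 :=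
      (Real.Gamma_pos_of_pos (hμpos ℓ hℓ)).ne'
    simp only [Nat.cast_zero, zero_add]
    field_simp
  | succ n ih =>
    rw [Finset.prod_Icc_succ_top (Nat.le_add_left 1 n), ih]
    have hμprodne : (∏ ℓ ∈ Icc 1 k, ((n:ℝ) + (T0 + 1 - (ℓ:ℝ)) / σ)) ≠ 0 := by
      apply ne_of_gt
      apply Finset.prod_pos
      intro ℓ hℓ
      have := hμpos ℓ hℓ
      have hn0 : (0:ℝ) ≤ n := Nat.cast_nonneg n
      linarith
    have hkey := key (n+1) (Nat.le_add_left 1 n)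
    have hc : ((n+1:ℕ):ℝ) - 1 = (n:ℝ) := by push_cast; ring
    rw [hc] at hkey
    have hfval : f (n+1) = ∏ ℓ ∈ Icc 1 k,
        (((n:ℝ) + lam ℓ) / ((n:ℝ) + (T0 + 1 - (ℓ:ℝ)) / σ)) := by
      rw [Finset.prod_div_distrib, eq_div_iff hμprodne]
      exact hkey
    rw [hfval, ← Finset.prod_mul_distrib]
    apply Finset.prod_congr rfl
    intro ℓ hℓ
    have hne1 : (n:ℝ) + lam ℓ ≠ 0 := hlamne ℓ hℓ n
    have hμp := hμpos ℓ hℓ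
    have hnμ : (0:ℝ) < (n:ℝ) + (T0 + 1 - (ℓ:ℝ)) / σ := by
      have hn0 : (0:ℝ) ≤ n := Nat.cast_nonneg n
      linarith
    have hG1 : Real.Gamma (((n+1:ℕ):ℝ) + lam ℓ)
        = ((n:ℝ) + lam ℓ) * Real.Gamma ((n:ℝ) + lam ℓ) := by
      have h : ((n+1:ℕ):ℝ) + lam ℓ = ((n:ℝ) + lam ℓ) + 1 := by push_cast; ring
      rw [h, Real.Gamma_add_one hne1]
    have hG2 : Real.Gamma (((n+1:ℕ):ℝ) + (T0 + 1 - (ℓ:ℝ)) / σ)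
        = ((n:ℝ) + (T0 + 1 - (ℓ:ℝ)) / σ) * Real.Gamma ((n:ℝ) + (T0 + 1 - (ℓ:ℝ)) / σ) := by
      have h : ((n+1:ℕ):ℝ) + (T0 + 1 - (ℓ:ℝ)) / σ = ((n:ℝ) + (T0 + 1 - (ℓ:ℝ)) / σ) + 1 := by
        push_cast; ring
      rw [h, Real.Gamma_add_one hnμ.ne']
    rw [hG1, hG2]
    have hG3 : Real.Gamma ((n:ℝ) + (T0 + 1 - (ℓ:ℝ)) / σ) ≠ 0 :=
      (Real.Gamma_pos_of_pos hnμ).ne'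
    have hG4 := hGlam ℓ hℓ
    set A := Real.Gamma ((n:ℝ) + lam ℓ) with hA
    set B := Real.Gamma ((T0 + 1 - (ℓ:ℝ)) / σ) with hB
    set C := Real.Gamma (lam ℓ) with hC
    set D := Real.Gamma ((n:ℝ) + (T0 + 1 - (ℓ:ℝ)) / σ) with hD
    rw [div_mul_div_comm]
    congr 1
    · ring
    · ring
end
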